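/- Let A_0, A_1, …, A_L ∈ ℂ^{n×n} and let 𝒜 ∈ ℂ^{n(L+1)×n(L+1)} be the associated delay block matrix. For every nonzero complex number λ, λ is an eigenvalue of 𝒜 if and only if λ is an eigenvalue of the matrix ∑_{ℓ=0}^L λ^{−ℓ} A_ℓ ∈ ℂ^{n×n}. -/

import Mathlib

open Matrix BigOperators

/-- The delay block matrix associated to complex matrices `A 0, …, A L`: first block
row `(A 0  A 1 ⋯ A L)`, identity matrices on the block subdiagonal, zeros elsewhere. -/
def delayBlockC {n L : ℕ} (A : Fin (L + 1) → Matrix (Fin n) (Fin n) ℂ) :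
    Matrix (Fin n × Fin (L + 1)) (Fin n × Fin (L + 1)) ℂ :=
  fun p q =>
    if (p.2 : ℕ) = 0 then A q.2 p.1 q.1
    else if p.1 = q.1 ∧ (q.2 : ℕ) + 1 = (p.2 : ℕ) then 1 else 0


/-!
For `λ ≠ 0` the identity blocks on the subdiagonal turn `𝒜 v = λ v` into the recursion
`v_{ℓ-1} = λ v_ℓ`, so every eigenvector of `𝒜` for `λ` is the lift `(λ^{-ℓ} x)_ℓ` of its first
block `x`. On such a lift, the first block row of `𝒜 v = λ v` is exactly
`(∑ ℓ, λ^{-ℓ} A_ℓ) x = λ x`, so lifting is a bijection between the eigenvectors of the two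
matrices.
-/

namespace Matrix

theorem det_sub_smul_one_eq_zero_iff {ι R : Type*} [Fintype ι] [DecidableEq ι] [CommRing R]
    [IsDomain R] (M : Matrix ι ι R) (μ : R) :
    (M - μ • 1).det = 0 ↔ ∃ v ≠ 0, M *ᵥ v = μ • v := by
  simp_rw [← exists_mulVec_eq_zero_iff, sub_mulVec, smul_mulVec, one_mulVec, sub_eq_zero]

end Matrix

section DelayLift

variable {K : Type*} [Field K] {n L : ℕ}

noncomputable def delayLift (lam : K) (x : Fin n → K) : Fin n × Fin (L + 1) → K :=
  fun p => (lam ^ (p.2 : ℕ))⁻¹ * x p.1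

@[simp]
theorem delayLift_zero (lam : K) (x : Fin n → K) (i : Fin n) :
    delayLift (L := L) lam x (i, 0) = x i := by
  simp [delayLift]

theorem delayLift_eq_zero_iff {lam : K} {x : Fin n → K} :
    delayLift (L := L) lam x = 0 ↔ x = 0 := by
  refine ⟨fun h => funext fun i => ?_, fun h => by subst h; ext; simp [delayLift]⟩
  simpa using congrFun h (i, 0)

theorem delayLift_castSucc {lam : K} (hlam : lam ≠ 0) (x : Fin n → K) (i : Fin n) (j : Fin L) :
    delayLift lam x (i, j.castSucc) = lam * delayLift lam x (i, j.succ) := by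
  simp only [delayLift, Fin.val_castSucc, Fin.val_succ, pow_succ, mul_inv]
  field_simp

theorem eq_delayLift_of_forall_castSucc {lam : K} (hlam : lam ≠ 0)
    {v : Fin n × Fin (L + 1) → K} (hv : ∀ i (j : Fin L), v (i, j.castSucc) = lam * v (i, j.succ)) :
    v = delayLift lam (fun i => v (i, 0)) := by
  funext ⟨i, j⟩
  induction j using Fin.induction with
  | zero => simp
  | succ j ih =>
    rw [eq_inv_mul_iff_mul_eq₀ hlam |>.mpr (hv i j).symm, ih]
    simp only [delayLift, Fin.val_castSucc, Fin.val_succ, pow_succ, mul_inv]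
    ring

theorem sum_mul_delayLift (A : Fin (L + 1) → Matrix (Fin n) (Fin n) K) (lam : K)
    (x : Fin n → K) (i : Fin n) :
    ∑ q : Fin n × Fin (L + 1), A q.2 i q.1 * delayLift lam x q =
      ((∑ ℓ : Fin (L + 1), (lam ^ (ℓ : ℕ))⁻¹ • A ℓ) *ᵥ x) i := by
  rw [sum_mulVec, Finset.sum_apply, Fintype.sum_prod_type_right]
  refine Finset.sum_congr rfl fun ℓ _ => ?_
  rw [smul_mulVec, Pi.smul_apply, smul_eq_mul, mulVec, dotProduct, Finset.mul_sum]
  exact Finset.sum_congr rfl fun k _ => by rw [delayLift]; ring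

end DelayLift

section DelayBlock

variable {n L : ℕ} (A : Fin (L + 1) → Matrix (Fin n) (Fin n) ℂ)

theorem delayBlockC_mulVec_zero (v : Fin n × Fin (L + 1) → ℂ) (i : Fin n) :
    (delayBlockC A *ᵥ v) (i, 0) = ∑ q : Fin n × Fin (L + 1), A q.2 i q.1 * v q := by
  simp [mulVec, dotProduct, delayBlockC]

theorem delayBlockC_mulVec_succ (v : Fin n × Fin (L + 1) → ℂ) (i : Fin n) (j : Fin L) :
    (delayBlockC A *ᵥ v) (i, j.succ) = v (i, j.castSucc) := by
  rw [mulVec, dotProduct, Fintype.sum_eq_single (i, j.castSucc)]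
  · simp [delayBlockC]
  · rintro ⟨k, m⟩ h
    simp_all [delayBlockC, Fin.ext_iff]

theorem delayBlockC_mulVec_eq_smul_iff (v : Fin n × Fin (L + 1) → ℂ) (lam : ℂ) :
    delayBlockC A *ᵥ v = lam • v ↔
      (∀ i, ∑ q : Fin n × Fin (L + 1), A q.2 i q.1 * v q = lam * v (i, 0)) ∧
        ∀ i (j : Fin L), v (i, j.castSucc) = lam * v (i, j.succ) := by
  simp only [funext_iff, Prod.forall, Pi.smul_apply, smul_eq_mul]
  rw [← forall_and]
  refine forall_congr' fun i => ?_
  rw [Fin.forall_fin_succ, delayBlockC_mulVec_zero]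
  simp only [delayBlockC_mulVec_succ]

theorem delayBlockC_mulVec_delayLift_eq_smul_iff {lam : ℂ} (hlam : lam ≠ 0) (x : Fin n → ℂ) :
    delayBlockC A *ᵥ delayLift lam x = lam • delayLift lam x ↔
      (∑ ℓ : Fin (L + 1), (lam ^ (ℓ : ℕ))⁻¹ • A ℓ) *ᵥ x = lam • x := by
  rw [delayBlockC_mulVec_eq_smul_iff]
  simp only [sum_mul_delayLift, delayLift_castSucc hlam, delayLift_zero, implies_true, and_true,
    funext_iff, Pi.smul_apply, smul_eq_mul]

end DelayBlock

theorem stmt3 {n L : ℕ} (A : Fin (L + 1) → Matrix (Fin n) (Fin n) ℂ)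
    (lam : ℂ) (hlam : lam ≠ 0) :
    (delayBlockC A - lam • (1 : Matrix (Fin n × Fin (L + 1)) (Fin n × Fin (L + 1)) ℂ)).det = 0 ↔
      ((∑ ℓ : Fin (L + 1), (lam ^ (ℓ : ℕ))⁻¹ • A ℓ) -
        lam • (1 : Matrix (Fin n) (Fin n) ℂ)).det = 0 := by
  rw [det_sub_smul_one_eq_zero_iff, det_sub_smul_one_eq_zero_iff]
  constructor
  · rintro ⟨v, hv0, hv⟩
    have hv_lift := eq_delayLift_of_forall_castSucc hlam
      ((delayBlockC_mulVec_eq_smul_iff A v lam).mp hv).2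
    refine ⟨fun i => v (i, 0), fun h => hv0 (hv_lift.trans (delayLift_eq_zero_iff.mpr h)), ?_⟩
    rw [hv_lift] at hv
    exact (delayBlockC_mulVec_delayLift_eq_smul_iff A hlam _).mp hv
  · rintro ⟨x, hx0, hx⟩
    exact ⟨delayLift lam x, delayLift_eq_zero_iff.not.mpr hx0,
      (delayBlockC_mulVec_delayLift_eq_smul_iff A hlam x).mpr hx⟩
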